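/- Let ρ satisfy P1–P4 with sup ρ = a, let 0 < b < a, and let H*_n be a sequence of discrete distributions on ℝ, each giving mass at least 1/n to each of at least n(1 − b/a) + 1 points lying in a fixed bounded interval [−M, M]. Then the M-scales s_n defined by E_{H*_n}[ρ(u/s_n)] = b satisfy sup_n s_n < ∞. -/

import Mathlib

open MeasureTheory Set Filter Topology

/-!
Since `ρ` is continuous at `0` with `ρ 0 = 0`, a single scale `σ₀` makes `ρ (M / σ₀) < a / n`.
For every `j` the points of `T` carry mass `h ≥ 1 - b / a + 1 / n`, and on them
`ρ (x / σ₀) ≤ ρ (M / σ₀)`, while elsewhere `ρ ≤ a`; hence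
`∫ ρ (x / σ₀) d(H j) ≤ a (1 - h) + ρ (M / σ₀) < b - a / n + a / n = b`, so `σ₀` bounds every
M-scale `s j`.
-/

section MassBounds

variable {α : Type*} [MeasurableSpace α] {μ : Measure α}

theorem integral_le_of_le_of_le_on [IsProbabilityMeasure μ] {f : α → ℝ} {S : Set α} {a c : ℝ}
    (hS : MeasurableSet S) (hf0 : 0 ≤ f) (hfa : ∀ x, f x ≤ a) (hfc : ∀ x ∈ S, f x ≤ c) :
    ∫ x, f x ∂μ ≤ a * (1 - μ.real S) + c * μ.real S := by
  have hga : Integrable (Sᶜ.indicator fun _ => a) μ := (integrable_const a).indicator hS.compl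
  have hgc : Integrable (S.indicator fun _ => c) μ := (integrable_const c).indicator hS
  calc ∫ x, f x ∂μ ≤ ∫ x, (Sᶜ.indicator (fun _ => a) x + S.indicator (fun _ => c) x) ∂μ := by
        refine integral_mono_of_nonneg (.of_forall hf0) (hga.add hgc) (.of_forall fun x => ?_)
        by_cases hx : x ∈ S
        · simpa [hx] using hfc x hx
        · simpa [hx] using hfa x
    _ = a * (1 - μ.real S) + c * μ.real S := by
        rw [integral_add hga hgc, integral_indicator_const _ hS.compl,
          integral_indicator_const _ hS, probReal_compl_eq_one_sub hS, smul_eq_mul, smul_eq_mul,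
          mul_comm a, mul_comm c]

theorem card_mul_le_measureReal [MeasurableSingletonClass α] [IsFiniteMeasure μ]
    {T : Finset α} {m : ℝ} (h : ∀ t ∈ T, m ≤ μ.real {t}) : T.card * m ≤ μ.real T := by
  rw [← sum_measureReal_singleton]
  simpa using Finset.card_nsmul_le_sum T _ m h

end MassBounds

section Rho

variable {ρ : ℝ → ℝ}

theorem comp_abs_of_even (heven : ∀ u, ρ (-u) = ρ u) (u : ℝ) : ρ |u| = ρ u := by
  rcases abs_choice u with h | h <;> simp [h, heven]

theorem le_of_abs_le_of_even (heven : ∀ u, ρ (-u) = ρ u) (hmono : MonotoneOn ρ (Ici 0))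
    {x y : ℝ} (h : |x| ≤ y) : ρ x ≤ ρ y := by
  rw [← comp_abs_of_even heven x]
  exact hmono (abs_nonneg x) ((abs_nonneg x).trans h) h

theorem nonneg_of_even (hρ0 : ρ 0 = 0) (heven : ∀ u, ρ (-u) = ρ u)
    (hmono : MonotoneOn ρ (Ici 0)) (u : ℝ) : 0 ≤ ρ u := by
  rw [← comp_abs_of_even heven u, ← hρ0]
  exact hmono self_mem_Ici (abs_nonneg u) (abs_nonneg u)

theorem exists_pos_comp_div_lt (hρ0 : ρ 0 = 0) (hcont : ContinuousAt ρ 0) (M : ℝ) {ε : ℝ}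
    (hε : 0 < ε) : ∃ σ, 0 < σ ∧ ρ (M / σ) < ε := by
  have hlim : Tendsto (fun σ => ρ (M / σ)) atTop (𝓝 0) :=
    hρ0 ▸ hcont.tendsto.comp (tendsto_const_nhds.div_atTop tendsto_id)
  exact ((eventually_gt_atTop 0).and (hlim.eventually_lt_const hε)).exists

/-- Lemma A.1(b). -/
theorem integral_comp_div_le (hρ0 : ρ 0 = 0) (heven : ∀ u, ρ (-u) = ρ u)
    (hmono : MonotoneOn ρ (Ici 0)) {a : ℝ} (hρa : ∀ u, ρ u ≤ a) (μ : Measure ℝ)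
    [IsProbabilityMeasure μ] {S : Set ℝ} {M σ : ℝ} (hS : MeasurableSet S)
    (hSM : ∀ x ∈ S, |x| ≤ M) (hσ : 0 < σ) :
    ∫ x, ρ (x / σ) ∂μ ≤ a * (1 - μ.real S) + ρ (M / σ) * μ.real S := by
  refine integral_le_of_le_of_le_on hS (fun x => nonneg_of_even hρ0 heven hmono _)
    (fun x => hρa _) fun x hx => le_of_abs_le_of_even heven hmono ?_
  rw [abs_div, abs_of_pos hσ]
  exact div_le_div_of_nonneg_right (hSM x hx) hσ.le

/-- Since `sInf ∅ = 0`, this is `0` when no scale brings the objective below `b`. -/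
noncomputable def mScale (ρ : ℝ → ℝ) (μ : Measure ℝ) (b : ℝ) : ℝ :=
  sInf {σ : ℝ | 0 < σ ∧ ∫ x, ρ (x / σ) ∂μ < b}

theorem mScale_le {μ : Measure ℝ} {b σ : ℝ} (hσ : 0 < σ) (h : ∫ x, ρ (x / σ) ∂μ < b) :
    mScale ρ μ b ≤ σ :=
  csInf_le ⟨0, fun _ hτ => hτ.1.le⟩ ⟨hσ, h⟩

end Rho

theorem mscales_uniformly_bounded_general (ρ : ℝ → ℝ) (a b M : ℝ)
    (hρ0 : ρ 0 = 0) (hcont : ContinuousAt ρ 0)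
    (heven : ∀ u, ρ (-u) = ρ u) (hmono : MonotoneOn ρ (Set.Ici 0))
    (hsup : IsLUB (Set.range ρ) a) (hb : 0 < b) (hba : b < a)
    (n : ℕ) (hn : 0 < n)
    (H : ℕ → Measure ℝ) (hprob : ∀ j, IsProbabilityMeasure (H j))
    (hmass : ∀ j, ∃ T : Finset ℝ, (n : ℝ) * (1 - b / a) + 1 ≤ T.card ∧
      (∀ t ∈ T, |t| ≤ M) ∧ ∀ t ∈ T, (1 : ℝ) / n ≤ ((H j) {t}).toReal)
    (s : ℕ → ℝ)
    (hs : ∀ j, s j = sInf {σ : ℝ | 0 < σ ∧ ∫ x, ρ (x / σ) ∂(H j) < b}) :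
    BddAbove (Set.range s) := by
  have ha : 0 < a := hb.trans hba
  have hρa : ∀ u, ρ u ≤ a := fun u => hsup.1 ⟨u, rfl⟩
  obtain ⟨σ₀, hσ₀, hsmall⟩ := exists_pos_comp_div_lt hρ0 hcont M (ε := a / n) (by positivity)
  refine ⟨σ₀, forall_mem_range.2 fun j => ?_⟩
  have := hprob j
  obtain ⟨T, hcard, hTM, hTmass⟩ := hmass j
  have hmassT : 1 - b / a + 1 / n ≤ (H j).real T :=
    calc 1 - b / a + 1 / n = (n * (1 - b / a) + 1) * (1 / n) := by field_simp
      _ ≤ T.card * (1 / n) := by gcongr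
      _ ≤ (H j).real T := card_mul_le_measureReal hTmass
  have hc0 := nonneg_of_even hρ0 heven hmono (M / σ₀)
  rw [hs j]
  refine mScale_le hσ₀ ?_
  calc ∫ x, ρ (x / σ₀) ∂(H j)
      ≤ a * (1 - (H j).real T) + ρ (M / σ₀) * (H j).real T :=
        integral_comp_div_le hρ0 heven hmono hρa (H j) T.measurableSet hTM hσ₀
    _ < b := by
        have hcT := mul_le_of_le_one_right hc0 (measureReal_le_one (μ := H j) (s := T))
        have hexpand : a * (1 - b / a + 1 / n) = a - b + a / n := by field_simp
        nlinarith [mul_le_mul_of_nonneg_left hmassT ha.le]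

/-- Uniform boundedness of M-scales (A.15): if each distribution in a sequence gives mass at
least `1/n` to each of more than `n(1 - b/a)` points lying in a fixed bounded interval
`[-M, M]`, then the corresponding M-scales (with target `b`, `0 < b < a = sup ρ`) are
uniformly bounded. -/
theorem mscales_uniformly_bounded (ρ : ℝ → ℝ) (a b M : ℝ)
    (hnonneg : ∀ u, 0 ≤ ρ u) (hρ0 : ρ 0 = 0) (hcont : ContinuousAt ρ 0)
    (heven : ∀ u, ρ (-u) = ρ u) (hmono : MonotoneOn ρ (Set.Ici 0))
    (hsup : IsLUB (Set.range ρ) a) (hb : 0 < b) (hba : b < a)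
    (n : ℕ) (hn : 0 < n)
    (H : ℕ → Measure ℝ) (hprob : ∀ j, IsProbabilityMeasure (H j))
    (hmass : ∀ j, ∃ T : Finset ℝ, (n : ℝ) * (1 - b / a) + 1 ≤ T.card ∧
      (∀ t ∈ T, |t| ≤ M) ∧ ∀ t ∈ T, (1 : ℝ) / n ≤ ((H j) {t}).toReal)
    (s : ℕ → ℝ)
    (hs : ∀ j, s j = sInf {σ : ℝ | 0 < σ ∧ ∫ x, ρ (x / σ) ∂(H j) < b}) :
    BddAbove (Set.range s) :=
  mscales_uniformly_bounded_general ρ a b M hρ0 hcont heven hmono hsup hb hba n hn H hprob hmass s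
    hs
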